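/- arXiv:math/0010079 — 3 statements merged into one kernel-verified Lean document; each statement's English description precedes it below -/
import Mathlib

section
/- There is a canonical AH-isomorphism ℍ ⊗_ℍ U ≅ U for every AH-module U, where ℍ is regarded as the AH-module (ℍ, 𝕀). -/
open Module

local notation "ℍ" => Quaternion ℝ

noncomputable section

/-- The imaginary quaternions, as a real subspace of `ℍ`. -/
def ImH : Submodule ℝ ℍ where
  carrier := {x | x.re = 0}
  add_mem' := by
    intro a b ha hb
    simp only [Set.mem_setOf_eq] at *
    simp [ha, hb]
  zero_mem' := by simp [Quaternion.re_zero]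
  smul_mem' := by
    intro c x hx
    simp only [Set.mem_setOf_eq] at *
    simp [hx]

variable {U : Type*} [AddCommGroup U] [Module ℝ U] [Module ℍ U]
variable {V : Type*} [AddCommGroup V] [Module ℝ V] [Module ℍ V]
variable {W : Type*} [AddCommGroup W] [Module ℝ W] [Module ℍ W]
variable {X : Type*} [AddCommGroup X] [Module ℝ X] [Module ℍ X]

/-- `U^†`: the real subspace of those real-linear maps `U → ℍ` that are `ℍ`-linear
and map the distinguished subspace `U'` into the imaginary quaternions. -/
def AHDual (U' : Submodule ℝ U) : Submodule ℝ (U →ₗ[ℝ] ℍ) where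
  carrier := {α | (∀ (c : ℍ) (u : U), α (c • u) = c * α u) ∧ ∀ u ∈ U', (α u).re = 0}
  zero_mem' := ⟨fun c u => by simp, fun u hu => by simp [Quaternion.re_zero]⟩
  add_mem' := by
    rintro a b ⟨ha1, ha2⟩ ⟨hb1, hb2⟩
    exact ⟨fun c u => by simp [ha1 c u, hb1 c u, mul_add],
           fun u hu => by simp [ha2 u hu, hb2 u hu]⟩
  smul_mem' := by
    rintro r α ⟨h1, h2⟩
    refine ⟨fun c u => ?_, fun u hu => ?_⟩
    · simp [h1 c u, mul_smul_comm]
    · simp [h2 u hu]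

/-- The AH-module condition: `U^†` separates points of `U`. -/
def IsAH (U' : Submodule ℝ U) : Prop :=
  ∀ u : U, (∀ α : U →ₗ[ℝ] ℍ, α ∈ AHDual U' → α u = 0) → u = 0

/-- The map `ι_U : U → ((U^†) →ₗ ℍ)`, `ι_U(u)(α) = α(u)`. -/
def iotaAH (U' : Submodule ℝ U) : U →ₗ[ℝ] (↥(AHDual U') →ₗ[ℝ] ℍ) where
  toFun u :=
    { toFun := fun α => (α : U →ₗ[ℝ] ℍ) u
      map_add' := fun a b => rfl
      map_smul' := fun r a => rfl }
  map_add' := fun u v => LinearMap.ext fun α => by simp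
  map_smul' := fun r u => LinearMap.ext fun α => by simp

@[simp] theorem iotaAH_apply (U' : Submodule ℝ U) (u : U) (α : ↥(AHDual U')) :
    iotaAH U' u α = (α : U →ₗ[ℝ] ℍ) u := rfl

/-- The quaternionic tensor product `U ⊗_ℍ V`, realised as the subspace of real-bilinear
maps `U^† × V^† → ℍ` all of whose slices lie in `ι_U(U)` resp. `ι_V(V)`. -/
def QTP (U' : Submodule ℝ U) (V' : Submodule ℝ V) :
    Submodule ℝ (↥(AHDual U') →ₗ[ℝ] ↥(AHDual V') →ₗ[ℝ] ℍ) where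
  carrier := {B | (∀ β, ∃ u : U, ∀ α, B α β = iotaAH U' u α) ∧
                  (∀ α, ∃ v : V, ∀ β, B α β = iotaAH V' v β)}
  zero_mem' :=
    ⟨fun β => ⟨0, fun α => by simp⟩, fun α => ⟨0, fun β => by simp⟩⟩
  add_mem' := by
    rintro B C ⟨hB1, hB2⟩ ⟨hC1, hC2⟩
    refine ⟨fun β => ?_, fun α => ?_⟩
    · obtain ⟨u, hu⟩ := hB1 β; obtain ⟨u', hu'⟩ := hC1 β
      exact ⟨u + u', fun α => by simp [hu α, hu' α]⟩
    · obtain ⟨v, hv⟩ := hB2 α; obtain ⟨v', hv'⟩ := hC2 α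
      exact ⟨v + v', fun β => by simp [hv β, hv' β]⟩
  smul_mem' := by
    rintro r B ⟨h1, h2⟩
    refine ⟨fun β => ?_, fun α => ?_⟩
    · obtain ⟨u, hu⟩ := h1 β; exact ⟨r • u, fun α => by simp [hu α]⟩
    · obtain ⟨v, hv⟩ := h2 α; exact ⟨r • v, fun β => by simp [hv β]⟩

/-- The left action of a quaternion `c` on the ambient space of `U ⊗_ℍ V`. -/
def hsmulBil (U' : Submodule ℝ U) (V' : Submodule ℝ V) (c : ℍ) :
    (↥(AHDual U') →ₗ[ℝ] ↥(AHDual V') →ₗ[ℝ] ℍ) →ₗ[ℝ]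
      (↥(AHDual U') →ₗ[ℝ] ↥(AHDual V') →ₗ[ℝ] ℍ) where
  toFun B :=
    { toFun := fun α =>
        { toFun := fun β => c * B α β
          map_add' := fun b b' => by simp [mul_add]
          map_smul' := fun r b => by simp [mul_smul_comm] }
      map_add' := fun a a' => LinearMap.ext fun β => by simp [mul_add]
      map_smul' := fun r a => LinearMap.ext fun β => by simp [mul_smul_comm] }
  map_add' := fun B B' => LinearMap.ext fun α => LinearMap.ext fun β => by simp [mul_add]
  map_smul' := fun r B => LinearMap.ext fun α => LinearMap.ext fun β => by simp [mul_smul_comm]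

@[simp] theorem hsmulBil_apply (U' : Submodule ℝ U) (V' : Submodule ℝ V) (c : ℍ)
    (B : ↥(AHDual U') →ₗ[ℝ] ↥(AHDual V') →ₗ[ℝ] ℍ) (α : ↥(AHDual U')) (β : ↥(AHDual V')) :
    hsmulBil U' V' c B α β = c * B α β := rfl

theorem hsmulBil_mem {U' : Submodule ℝ U} {V' : Submodule ℝ V} (c : ℍ)
    {B : ↥(AHDual U') →ₗ[ℝ] ↥(AHDual V') →ₗ[ℝ] ℍ} (hB : B ∈ QTP U' V') :
    hsmulBil U' V' c B ∈ QTP U' V' := by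
  obtain ⟨h1, h2⟩ := hB
  constructor
  · intro β
    obtain ⟨u, hu⟩ := h1 β
    refine ⟨c • u, fun α => ?_⟩
    have hα : (α : U →ₗ[ℝ] ℍ) (c • u) = c * (α : U →ₗ[ℝ] ℍ) u := α.2.1 c u
    rw [hsmulBil_apply, hu α, iotaAH_apply, iotaAH_apply, hα]
  · intro α
    obtain ⟨v, hv⟩ := h2 α
    refine ⟨c • v, fun β => ?_⟩
    have hβ : (β : V →ₗ[ℝ] ℍ) (c • v) = c * (β : V →ₗ[ℝ] ℍ) v := β.2.1 c v
    rw [hsmulBil_apply, hv β, iotaAH_apply, iotaAH_apply, hβ]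

/-- The primed part of `U ⊗_ℍ V` (the intersection with `𝕀 ⊗ (U^†)^* ⊗ (V^†)^*`). -/
def QTPprimeSet (U' : Submodule ℝ U) (V' : Submodule ℝ V) : Set ↥(QTP U' V') :=
  {x | ∀ (α : ↥(AHDual U')) (β : ↥(AHDual V')),
    (((x : ↥(AHDual U') →ₗ[ℝ] ↥(AHDual V') →ₗ[ℝ] ℍ)) α β).re = 0}

/-- `X_q'`: the real subspace of quaternions anticommuting with `q`. -/
def XqP (q : ℍ) : Submodule ℝ ℍ where
  carrier := {p | p * q = -(q * p)}
  zero_mem' := by simp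
  add_mem' := by
    intro a b ha hb
    simp only [Set.mem_setOf_eq] at *
    rw [add_mul, mul_add, ha, hb, neg_add]
  smul_mem' := by
    intro r p hp
    simp only [Set.mem_setOf_eq] at *
    rw [smul_mul_assoc, hp, mul_smul_comm, smul_neg]

theorem XqP_le_im {q : ℍ} (hq : q.re = 0) (hq0 : q ≠ 0) :
    ∀ p ∈ XqP q, p.re = 0 := by
  intro p hp
  have h : p * q + q * p = 0 := by
    have h' : p * q = -(q * p) := hp
    rw [h', neg_add_cancel]
  have e1 : p.re * q.imI = 0 := by
    have := congrArg QuaternionAlgebra.imI h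
    simp only [Quaternion.imI_add, Quaternion.imI_mul, Quaternion.imI_zero, hq] at this
    linarith
  have e2 : p.re * q.imJ = 0 := by
    have := congrArg QuaternionAlgebra.imJ h
    simp only [Quaternion.imJ_add, Quaternion.imJ_mul, Quaternion.imJ_zero, hq] at this
    linarith
  have e3 : p.re * q.imK = 0 := by
    have := congrArg QuaternionAlgebra.imK h
    simp only [Quaternion.imK_add, Quaternion.imK_mul, Quaternion.imK_zero, hq] at this
    linarith
  by_contra hpre
  apply hq0
  ext
  · exact hq
  · exact (mul_eq_zero.mp e1).resolve_left hpre
  · exact (mul_eq_zero.mp e2).resolve_left hpre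
  · exact (mul_eq_zero.mp e3).resolve_left hpre

open Classical in
/-- The identity map `ℍ → ℍ`, as an element of `(X_q)^†` (junk value if `q` is not
a nonzero imaginary quaternion). -/
def idXqDual (q : ℍ) : ↥(AHDual (XqP q)) :=
  if h : q.re = 0 ∧ q ≠ 0 then
    ⟨(LinearMap.id : ℍ →ₗ[ℝ] ℍ),
      ⟨fun c u => by simp [smul_eq_mul], fun u hu => XqP_le_im h.1 h.2 u hu⟩⟩
  else 0

/-- The image of `id ⊗_ℍ χ_q : U ⊗_ℍ X_q → U` inside `U`. -/
def chiImage (U' : Submodule ℝ U) (q : ℍ) : Set U :=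
  {u | ∃ B ∈ QTP U' (XqP q), ∀ α : ↥(AHDual U'), B α (idXqDual q) = iotaAH U' u α}

/-- A (finite-dimensional) AH-module is semistable if it is generated as an `ℍ`-module by
the images of the maps `id ⊗_ℍ χ_q` over all nonzero imaginary `q`. -/
def Semistable (U' : Submodule ℝ U) : Prop :=
  Submodule.span ℍ (⋃ q ∈ {q : ℍ | q.re = 0 ∧ q ≠ 0}, chiImage U' q) = ⊤

/-- `U ⊗_ℍ X_q` is AH-isomorphic to the direct sum of `n` copies of `X_q`. -/
def AHIsoNXq (U' : Submodule ℝ U) (q : ℍ) (n : ℕ) : Prop :=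
  ∃ e : ↥(QTP U' (XqP q)) ≃ₗ[ℝ] (Fin n → ℍ),
    (∀ (c : ℍ) (x : ↥(QTP U' (XqP q))),
      e ⟨hsmulBil U' (XqP q) c ↑x, hsmulBil_mem c x.2⟩ = c • e x) ∧
    ((fun x => e x) '' QTPprimeSet U' (XqP q) = {f : Fin n → ℍ | ∀ i, f i ∈ XqP q})

/-- A stable AH-module with virtual dimension `r`. -/
def Stable (U' : Submodule ℝ U) (r : ℕ) : Prop :=
  Semistable U' ∧ ∀ q : ℍ, q.re = 0 → q ≠ 0 → AHIsoNXq U' q r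

/-- A stable AH-module (existentially quantified virtual dimension). -/
def IsStable (U' : Submodule ℝ U) : Prop :=
  Semistable U' ∧ ∃ j r : ℕ, finrank ℝ U = 4 * j ∧ finrank ℝ ↥U' = 2 * j + r ∧
    ∀ q : ℍ, q.re = 0 → q ≠ 0 → AHIsoNXq U' q r

/-- The dual `φ^× : V^† → U^†` of an AH-morphism `φ : U → V`. -/
def dualPull (U' : Submodule ℝ U) (V' : Submodule ℝ V) (φ : U →ₗ[ℝ] V)
    (hφH : ∀ (c : ℍ) (u : U), φ (c • u) = c • φ u) (hφ' : ∀ u ∈ U', φ u ∈ V') :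
    ↥(AHDual V') →ₗ[ℝ] ↥(AHDual U') where
  toFun γ := ⟨(γ : V →ₗ[ℝ] ℍ).comp φ,
    ⟨fun c u => by simp [hφH c u, γ.2.1], fun u hu => γ.2.2 _ (hφ' u hu)⟩⟩
  map_add' := fun a b => Subtype.ext (LinearMap.ext fun u => by simp)
  map_smul' := fun r a => Subtype.ext (LinearMap.ext fun u => by simp)


/-!
Every element of `ℍ^†` is right multiplication by a real number, so a form `B ∈ ℍ ⊗_ℍ U` is
determined by its slice at `α = id`, which lies in `ι_U(U)`. Hence `u ↦ ((α, β) ↦ α (β u))` is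
onto, it is injective because `U^†` separates points, and it is visibly `ℍ`-equivariant.
It matches `U'` with the primed part because `U'` is cut out by the real parts of `U^†`: a real
functional `f` vanishing on `U'` is the real part of the `ℍ`-linear map
`u ↦ f u - i f (i u) - j f (j u) - k f (k u)`.
-/

def AHDual.idImH : ↥(AHDual ImH) :=
  ⟨LinearMap.id, fun _ _ => rfl, fun _ hu => hu⟩

@[simp] theorem AHDual.idImH_apply (x : ℍ) : (AHDual.idImH : ℍ →ₗ[ℝ] ℍ) x = x := rfl

/-- An `ℍ`-linear `α` satisfies `α x = x * α 1`; preserving `ImH` forces `α 1` to be real. -/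
theorem AHDual.ImH_apply_eq_re_smul (α : ↥(AHDual ImH)) (x : ℍ) :
    (α : ℍ →ₗ[ℝ] ℍ) x = ((α : ℍ →ₗ[ℝ] ℍ) 1).re • x := by
  obtain ⟨hlin, him⟩ := α.2
  set p := (α : ℍ →ₗ[ℝ] ℍ) 1
  have hmul (y : ℍ) : (α : ℍ →ₗ[ℝ] ℍ) y = y * p := by simpa using hlin y 1
  have hre : (p.im * p).re = 0 := by
    rw [← hmul]
    exact him _ p.re_im
  have hp : p = (p.re : ℍ) := by
    simp only [Quaternion.re_mul, Quaternion.re_im, Quaternion.imI_im, Quaternion.imJ_im,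
      Quaternion.imK_im, zero_mul, zero_sub] at hre
    ext <;> simp <;> nlinarith [sq_nonneg p.imI, sq_nonneg p.imJ, sq_nonneg p.imK]
  rw [hmul, hp, Quaternion.mul_coe_eq_smul, Quaternion.re_coe]

theorem AHDual.eq_re_smul_idImH (α : ↥(AHDual ImH)) :
    α = ((α : ℍ →ₗ[ℝ] ℍ) 1).re • AHDual.idImH :=
  Subtype.ext <| LinearMap.ext fun x => by simp [AHDual.ImH_apply_eq_re_smul α x]

variable {U' : Submodule ℝ U}

theorem IsAH.coe_smul (hAH : IsAH U') (r : ℝ) (x : U) : (r : ℍ) • x = r • x := by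
  refine sub_eq_zero.mp (hAH _ fun α hα => ?_)
  rw [map_sub, hα.1, map_smul, Quaternion.coe_mul_eq_smul, sub_self]

theorem IsAH.isScalarTower (hAH : IsAH U') : IsScalarTower ℝ ℍ U :=
  ⟨fun r c x => by rw [← Quaternion.coe_mul_eq_smul, mul_smul, hAH.coe_smul]⟩

theorem Quaternion.eq_of_forall_re_mul_eq {p q : ℍ} (h : ∀ d : ℍ, (d * p).re = (d * q).re) :
    p = q := by
  have h0 : (star (p - q) * (p - q)).re = 0 := by rw [mul_sub, Quaternion.re_sub, h, sub_self]
  rwa [Quaternion.star_mul_self, Quaternion.re_coe, Quaternion.normSq_eq_zero, sub_eq_zero] at h0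

@[simps]
def quatI : ℍ := ⟨0, 1, 0, 0⟩
@[simps]
def quatJ : ℍ := ⟨0, 0, 1, 0⟩
@[simps]
def quatK : ℍ := ⟨0, 0, 0, 1⟩

theorem Quaternion.eq_re_add_imI_add_imJ_add_imK (d : ℍ) :
    d = d.re • (1 : ℍ) + d.imI • quatI + d.imJ • quatJ + d.imK • quatK := by
  ext <;> simp

section Quaternionify

variable [IsScalarTower ℝ ℍ U]

def quaternionify (f : U →ₗ[ℝ] ℝ) : U →ₗ[ℝ] ℍ where
  toFun u := f u • 1 - f (quatI • u) • quatI - f (quatJ • u) • quatJ - f (quatK • u) • quatK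
  map_add' u v := by simp only [smul_add, map_add]; module
  map_smul' r u := by simp only [smul_comm _ r u, map_smul, RingHom.id_apply]; module

theorem re_mul_quaternionify (f : U →ₗ[ℝ] ℝ) (d : ℍ) (u : U) :
    (d * quaternionify f u).re = f (d • u) := by
  conv_rhs => rw [d.eq_re_add_imI_add_imJ_add_imK]
  simp [quaternionify, add_smul, smul_assoc, Quaternion.re_mul, Quaternion.re_one,
    Quaternion.imI_one, Quaternion.imJ_one, Quaternion.imK_one]

theorem re_quaternionify (f : U →ₗ[ℝ] ℝ) (u : U) : (quaternionify f u).re = f u := by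
  simpa using re_mul_quaternionify f 1 u

theorem quaternionify_smul (f : U →ₗ[ℝ] ℝ) (c : ℍ) (u : U) :
    quaternionify f (c • u) = c * quaternionify f u :=
  Quaternion.eq_of_forall_re_mul_eq fun d => by
    rw [re_mul_quaternionify, ← mul_assoc, re_mul_quaternionify, mul_smul]

theorem quaternionify_mem_AHDual {f : U →ₗ[ℝ] ℝ} (hf : ∀ u ∈ U', f u = 0) :
    quaternionify f ∈ AHDual U' :=
  ⟨quaternionify_smul f, fun u hu => by rw [re_quaternionify, hf u hu]⟩

theorem mem_of_forall_AHDual_re_eq_zero {u : U}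
    (h : ∀ β ∈ AHDual U', ((β : U →ₗ[ℝ] ℍ) u).re = 0) : u ∈ U' := by
  rw [← Subspace.forall_mem_dualAnnihilator_apply_eq_zero_iff U' u]
  intro f hf
  rw [← re_quaternionify f u]
  exact h _ (quaternionify_mem_AHDual ((Submodule.mem_dualAnnihilator f).mp hf))

end Quaternionify

/-- `u ↦ 1 ⊗ u`, as the bilinear map `(α, β) ↦ α (β u)` on `ℍ^† × U^†`. -/
def oneTmulBil (U' : Submodule ℝ U) : U →ₗ[ℝ] ↥(AHDual ImH) →ₗ[ℝ] ↥(AHDual U') →ₗ[ℝ] ℍ where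
  toFun u := LinearMap.mk₂ ℝ (fun α β => (α : ℍ →ₗ[ℝ] ℍ) ((β : U →ₗ[ℝ] ℍ) u))
    (fun _ _ _ => rfl) (fun _ _ _ => rfl) (fun _ _ _ => by simp) (fun _ _ _ => by simp)
  map_add' u v := LinearMap.ext₂ fun α β => by simp
  map_smul' r u := LinearMap.ext₂ fun α β => by simp

@[simp] theorem oneTmulBil_apply (u : U) (α : ↥(AHDual ImH)) (β : ↥(AHDual U')) :
    oneTmulBil U' u α β = (α : ℍ →ₗ[ℝ] ℍ) ((β : U →ₗ[ℝ] ℍ) u) := rfl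

theorem oneTmulBil_mem_QTP (u : U) : oneTmulBil U' u ∈ QTP ImH U' := by
  refine ⟨fun β => ⟨(β : U →ₗ[ℝ] ℍ) u, fun α => rfl⟩, fun α => ⟨((α : ℍ →ₗ[ℝ] ℍ) 1).re • u, ?_⟩⟩
  intro β
  rw [oneTmulBil_apply, iotaAH_apply, map_smul, AHDual.ImH_apply_eq_re_smul α]

def oneTmul (U' : Submodule ℝ U) : U →ₗ[ℝ] ↥(QTP ImH U') :=
  (oneTmulBil U').codRestrict (QTP ImH U') oneTmulBil_mem_QTP

@[simp] theorem coe_oneTmul (u : U) :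
    (oneTmul U' u : ↥(AHDual ImH) →ₗ[ℝ] ↥(AHDual U') →ₗ[ℝ] ℍ) = oneTmulBil U' u := rfl

theorem oneTmul_injective (hAH : IsAH U') : Function.Injective (oneTmul U') := by
  refine (injective_iff_map_eq_zero _).mpr fun u hu => hAH u fun β hβ => ?_
  simpa using congrArg (fun B : ↥(QTP ImH U') =>
    (B : ↥(AHDual ImH) →ₗ[ℝ] ↥(AHDual U') →ₗ[ℝ] ℍ) AHDual.idImH ⟨β, hβ⟩) hu

theorem oneTmul_surjective : Function.Surjective (oneTmul U') := by
  intro B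
  obtain ⟨u, hu⟩ := B.2.2 AHDual.idImH
  refine ⟨u, Subtype.ext <| LinearMap.ext₂ fun α β => ?_⟩
  have hBα : B.1 α = ((α : ℍ →ₗ[ℝ] ℍ) 1).re • B.1 AHDual.idImH := by
    rw [← map_smul, ← AHDual.eq_re_smul_idImH]
  rw [coe_oneTmul, oneTmulBil_apply, AHDual.ImH_apply_eq_re_smul α, hBα, LinearMap.smul_apply,
    hu β, iotaAH_apply]

theorem hsmulBil_oneTmulBil (c : ℍ) (u : U) :
    hsmulBil ImH U' c (oneTmulBil U' u) = oneTmulBil U' (c • u) :=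
  LinearMap.ext₂ fun α β => by
    rw [hsmulBil_apply, oneTmulBil_apply, oneTmulBil_apply, β.2.1 c u,
      AHDual.ImH_apply_eq_re_smul α (c * _),
      AHDual.ImH_apply_eq_re_smul α ((β : U →ₗ[ℝ] ℍ) u), mul_smul_comm]

theorem oneTmul_mem_QTPprimeSet_iff [IsScalarTower ℝ ℍ U] (u : U) :
    oneTmul U' u ∈ QTPprimeSet ImH U' ↔ u ∈ U' := by
  refine ⟨fun h => mem_of_forall_AHDual_re_eq_zero fun β hβ => ?_, fun hu α β => ?_⟩
  · simpa using h AHDual.idImH ⟨β, hβ⟩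
  · rw [coe_oneTmul, oneTmulBil_apply, AHDual.ImH_apply_eq_re_smul α, Quaternion.re_smul,
      β.2.2 u hu, smul_zero]

/-- There is a canonical AH-isomorphism `ℍ ⊗_ℍ U ≅ U`, where `ℍ` carries
the AH-module structure `(ℍ, 𝕀)`: an `ℝ`-linear bijection which is `ℍ`-equivariant and
carries the primed part `(ℍ ⊗_ℍ U)'` onto `U'`. -/
theorem qtp_H_left_unit (U' : Submodule ℝ U) (hAH : IsAH U') :
    ∃ e : ↥(QTP ImH U') ≃ₗ[ℝ] U,
      (∀ (c : ℍ) (x : ↥(QTP ImH U')),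
        e ⟨hsmulBil ImH U' c ↑x, hsmulBil_mem c x.2⟩ = c • e x) ∧
      ((fun x => e x) '' QTPprimeSet ImH U' = (U' : Set U)) := by
  have := hAH.isScalarTower
  let e := LinearEquiv.ofBijective (oneTmul U') ⟨oneTmul_injective hAH, oneTmul_surjective⟩
  refine ⟨e.symm, fun c x => ?_, ?_⟩
  · obtain ⟨u, rfl⟩ := e.surjective x
    rw [e.symm_apply_apply, e.symm_apply_eq]
    exact Subtype.ext (hsmulBil_oneTmulBil c u)
  · ext u
    rw [show (fun x => e.symm x) = e.symm from rfl, e.symm.image_eq_preimage_symm,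
      LinearEquiv.symm_symm]
    exact oneTmul_mem_QTPprimeSet_iff u

end
end

section
/- Let φ : U → W and ψ : V → X be injective AH-morphisms between AH-modules. Then the induced map φ ⊗_ℍ ψ : U ⊗_ℍ V → W ⊗_ℍ X is an injective AH-morphism. -/
open Module

local notation "ℍ" => Quaternion ℝ

noncomputable section

variable {U : Type*} [AddCommGroup U] [Module ℝ U] [Module ℍ U]
variable {V : Type*} [AddCommGroup V] [Module ℝ V] [Module ℍ V]
variable {W : Type*} [AddCommGroup W] [Module ℝ W] [Module ℍ W]
variable {X : Type*} [AddCommGroup X] [Module ℝ X] [Module ℍ X]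

/-- The induced map `φ ⊗_ℍ ψ` on the ambient spaces of quaternionic tensor products,
given by precomposition with the dual maps `φ^×`, `ψ^×`. -/
def qtMap (U' : Submodule ℝ U) (V' : Submodule ℝ V)
    (W' : Submodule ℝ W) (X' : Submodule ℝ X)
    (φ : U →ₗ[ℝ] W) (hφH : ∀ (c : ℍ) (u : U), φ (c • u) = c • φ u)
    (hφ' : ∀ u ∈ U', φ u ∈ W')
    (ψ : V →ₗ[ℝ] X) (hψH : ∀ (c : ℍ) (v : V), ψ (c • v) = c • ψ v)
    (hψ' : ∀ v ∈ V', ψ v ∈ X') :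
    (↥(AHDual U') →ₗ[ℝ] ↥(AHDual V') →ₗ[ℝ] ℍ) →ₗ[ℝ]
      (↥(AHDual W') →ₗ[ℝ] ↥(AHDual X') →ₗ[ℝ] ℍ) where
  toFun B :=
    { toFun := fun γ => (B (dualPull U' W' φ hφH hφ' γ)).comp (dualPull V' X' ψ hψH hψ')
      map_add' := fun γ γ' => LinearMap.ext fun δ => by simp [map_add]
      map_smul' := fun r γ => LinearMap.ext fun δ => by simp [map_smul] }
  map_add' := fun B C => LinearMap.ext fun γ => LinearMap.ext fun δ => by simp
  map_smul' := fun r B => LinearMap.ext fun γ => LinearMap.ext fun δ => by simp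

theorem IsAH.eq_of_forall_apply_eq {U' : Submodule ℝ U} (hU : IsAH U') {u u' : U}
    (h : ∀ α ∈ AHDual U', α u = α u') : u = u' :=
  sub_eq_zero.mp <| hU _ fun α hα => by rw [map_sub, h α hα, sub_self]

theorem eq_of_forall_iotaAH_dualPull_eq {U' : Submodule ℝ U} {W' : Submodule ℝ W}
    (hW : IsAH W') {φ : U →ₗ[ℝ] W} (hφinj : Function.Injective φ)
    {hφH : ∀ (c : ℍ) (u : U), φ (c • u) = c • φ u} {hφ' : ∀ u ∈ U', φ u ∈ W'}
    {u u' : U}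
    (h : ∀ γ, iotaAH U' u (dualPull U' W' φ hφH hφ' γ) =
      iotaAH U' u' (dualPull U' W' φ hφH hφ' γ)) :
    u = u' :=
  hφinj <| hW.eq_of_forall_apply_eq fun γ hγ => h ⟨γ, hγ⟩

section qtMap

variable (U' : Submodule ℝ U) (V' : Submodule ℝ V) (W' : Submodule ℝ W) (X' : Submodule ℝ X)
  (φ : U →ₗ[ℝ] W) (hφH : ∀ (c : ℍ) (u : U), φ (c • u) = c • φ u)
  (hφ' : ∀ u ∈ U', φ u ∈ W')
  (ψ : V →ₗ[ℝ] X) (hψH : ∀ (c : ℍ) (v : V), ψ (c • v) = c • ψ v)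
  (hψ' : ∀ v ∈ V', ψ v ∈ X')

@[simp] theorem qtMap_apply (B : ↥(AHDual U') →ₗ[ℝ] ↥(AHDual V') →ₗ[ℝ] ℍ)
    (γ : ↥(AHDual W')) (δ : ↥(AHDual X')) :
    qtMap U' V' W' X' φ hφH hφ' ψ hψH hψ' B γ δ =
      B (dualPull U' W' φ hφH hφ' γ) (dualPull V' X' ψ hψH hψ' δ) := rfl

theorem qtMap_mem_QTP {B : ↥(AHDual U') →ₗ[ℝ] ↥(AHDual V') →ₗ[ℝ] ℍ}
    (hB : B ∈ QTP U' V') :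
    qtMap U' V' W' X' φ hφH hφ' ψ hψH hψ' B ∈ QTP W' X' := by
  refine ⟨fun δ => ?_, fun γ => ?_⟩
  · obtain ⟨u, hu⟩ := hB.1 (dualPull V' X' ψ hψH hψ' δ)
    exact ⟨φ u, fun γ => hu _⟩
  · obtain ⟨v, hv⟩ := hB.2 (dualPull U' W' φ hφH hφ' γ)
    exact ⟨ψ v, fun δ => hv _⟩

variable {U' V' W' X' φ ψ}

/-- Both slices of an element of `U ⊗_ℍ V` come from vectors, so `B` is recovered from its
values on the image of `φ^× × ψ^×` one factor at a time. -/
theorem qtMap_injOn_QTP (hW : IsAH W') (hX : IsAH X')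
    (hφinj : Function.Injective φ) (hψinj : Function.Injective ψ) :
    Set.InjOn (qtMap U' V' W' X' φ hφH hφ' ψ hψH hψ') (QTP U' V') := by
  intro B hB C hC hBC
  have h_on_image :
      ∀ α δ, B α (dualPull V' X' ψ hψH hψ' δ) = C α (dualPull V' X' ψ hψH hψ' δ) := by
    intro α δ
    obtain ⟨u, hu⟩ := hB.1 (dualPull V' X' ψ hψH hψ' δ)
    obtain ⟨u', hu'⟩ := hC.1 (dualPull V' X' ψ hψH hψ' δ)
    have huu' : u = u' := eq_of_forall_iotaAH_dualPull_eq hW hφinj fun γ => by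
      simpa only [qtMap_apply, hu, hu'] using LinearMap.congr_fun₂ hBC γ δ
    rw [hu, hu', huu']
  refine LinearMap.ext₂ fun α β => ?_
  obtain ⟨v, hv⟩ := hB.2 α
  obtain ⟨v', hv'⟩ := hC.2 α
  have hvv' : v = v' := eq_of_forall_iotaAH_dualPull_eq hX hψinj fun δ => by
    simpa only [hv, hv'] using h_on_image α δ
  rw [hv, hv', hvv']

end qtMap

theorem qtMap_injective_AH_morphism_general
    (U' : Submodule ℝ U) (V' : Submodule ℝ V)
    (W' : Submodule ℝ W) (X' : Submodule ℝ X)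
    (hW : IsAH W') (hX : IsAH X')
    (φ : U →ₗ[ℝ] W) (hφH : ∀ (c : ℍ) (u : U), φ (c • u) = c • φ u)
    (hφ' : ∀ u ∈ U', φ u ∈ W') (hφinj : Function.Injective φ)
    (ψ : V →ₗ[ℝ] X) (hψH : ∀ (c : ℍ) (v : V), ψ (c • v) = c • ψ v)
    (hψ' : ∀ v ∈ V', ψ v ∈ X') (hψinj : Function.Injective ψ) :
    (∀ B ∈ QTP U' V', qtMap U' V' W' X' φ hφH hφ' ψ hψH hψ' B ∈ QTP W' X') ∧
    (∀ B ∈ QTP U' V', ∀ C ∈ QTP U' V',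
      qtMap U' V' W' X' φ hφH hφ' ψ hψH hψ' B = qtMap U' V' W' X' φ hφH hφ' ψ hψH hψ' C
        → B = C) ∧
    (∀ B ∈ QTP U' V', (∀ α β, (B α β).re = 0) →
      ∀ γ δ, (qtMap U' V' W' X' φ hφH hφ' ψ hψH hψ' B γ δ).re = 0) :=
  ⟨fun _ hB => qtMap_mem_QTP U' V' W' X' φ hφH hφ' ψ hψH hψ' hB,
    fun _ hB _ hC => qtMap_injOn_QTP hφH hφ' hψH hψ' hW hX hφinj hψinj hB hC,
    fun _ _ hB _ _ => hB _ _⟩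

/-- If `φ : U → W` and `ψ : V → X` are injective AH-morphisms, then
`φ ⊗_ℍ ψ : U ⊗_ℍ V → W ⊗_ℍ X` is an injective AH-morphism: it maps `U ⊗_ℍ V` into
`W ⊗_ℍ X`, is injective there, and maps the primed part into the primed part. -/
theorem qtMap_injective_AH_morphism
    (U' : Submodule ℝ U) (V' : Submodule ℝ V)
    (W' : Submodule ℝ W) (X' : Submodule ℝ X)
    (hU : IsAH U') (hV : IsAH V') (hW : IsAH W') (hX : IsAH X')
    (φ : U →ₗ[ℝ] W) (hφH : ∀ (c : ℍ) (u : U), φ (c • u) = c • φ u)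
    (hφ' : ∀ u ∈ U', φ u ∈ W') (hφinj : Function.Injective φ)
    (ψ : V →ₗ[ℝ] X) (hψH : ∀ (c : ℍ) (v : V), ψ (c • v) = c • ψ v)
    (hψ' : ∀ v ∈ V', ψ v ∈ X') (hψinj : Function.Injective ψ) :
    (∀ B ∈ QTP U' V', qtMap U' V' W' X' φ hφH hφ' ψ hψH hψ' B ∈ QTP W' X') ∧
    (∀ B ∈ QTP U' V', ∀ C ∈ QTP U' V',
      qtMap U' V' W' X' φ hφH hφ' ψ hψH hψ' B = qtMap U' V' W' X' φ hφH hφ' ψ hψH hψ' C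
        → B = C) ∧
    (∀ B ∈ QTP U' V', (∀ α β, (B α β).re = 0) →
      ∀ γ δ, (qtMap U' V' W' X' φ hφH hφ' ψ hψH hψ' B γ δ).re = 0) :=
  qtMap_injective_AH_morphism_general U' V' W' X' hW hX φ hφH hφ' hφinj ψ hψH hψ' hψinj

end
end

section
/- For nonzero imaginary quaternion q, let X_q be the AH-module (ℍ, X_q') where X_q' = {p ∈ ℍ : pq = -qp}. Then X_q ⊗_ℍ X_q is AH-isomorphic to X_q. -/
open Module

local notation "ℍ" => Quaternion ℝ

noncomputable section

variable {U : Type*} [AddCommGroup U] [Module ℝ U] [Module ℍ U]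
variable {V : Type*} [AddCommGroup V] [Module ℝ V] [Module ℍ V]
variable {W : Type*} [AddCommGroup W] [Module ℝ W] [Module ℍ W]
variable {X : Type*} [AddCommGroup X] [Module ℝ X] [Module ℍ X]

/-!
Every `α ∈ X_q^†` is right multiplication by `α 1`, and testing `α` against the commutators
`w q - q w`, which lie in `X_q'`, shows that `α 1` commutes with `q`, i.e. lies in the
commutative subalgebra `ℝ[q] = ℝ ⊕ ℝ q`. Hence an element `B` of `X_q ⊗_ℍ X_q` is determined
by `p = B(id, id)` through `B(α, β) = p · β(1) · α(1)`, and every `p ∈ ℍ` occurs. `B` is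
primed iff `Re p = Re (p q) = 0`, i.e. iff `p` anticommutes with `q`.
-/

section

variable {p q c : ℍ}

theorem Quaternion.re_mul_comm (a b : ℍ) : (a * b).re = (b * a).re := by
  simp only [Quaternion.re_mul]; ring

theorem Quaternion.mul_self_eq_neg_normSq (hq : q.re = 0) :
    q * q = ((-Quaternion.normSq q : ℝ) : ℍ) := by
  rw [← sq, Quaternion.sq_eq_neg_normSq.mpr hq, Quaternion.coe_neg]

theorem Quaternion.mem_adjoin_of_commute (hq : q.re = 0) (hq0 : q ≠ 0) (h : Commute q c) :
    c ∈ Algebra.adjoin ℝ {q} := by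
  -- `c.im * q` is self-adjoint, hence real, so `c.im ∈ ℝ q⁻¹ = ℝ q`
  have him : Commute q c.im := by
    rw [eq_sub_of_add_eq' c.re_add_im]
    exact h.sub_right (Quaternion.coe_commutes c.re q).symm
  have hreal : c.im * q = ((c.im * q).re : ℍ) := by
    rw [← Quaternion.star_eq_self, star_mul, Quaternion.star_eq_neg.mpr hq,
      Quaternion.star_eq_neg.mpr c.re_im, neg_mul_neg, him.eq]
  have hsmul : (-Quaternion.normSq q) • c.im = (c.im * q).re • q := by
    rw [← Quaternion.mul_coe_eq_smul, ← Quaternion.mul_self_eq_neg_normSq hq, ← mul_assoc, hreal,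
      Quaternion.coe_mul_eq_smul, Quaternion.re_coe]
  have hnorm : -Quaternion.normSq q ≠ 0 := neg_ne_zero.mpr (Quaternion.normSq_ne_zero.mpr hq0)
  rw [← c.re_add_im, ← inv_smul_smul₀ hnorm c.im, hsmul, smul_smul]
  exact Subalgebra.add_mem _ (Subalgebra.algebraMap_mem _ c.re)
    (Subalgebra.smul_mem _ (Algebra.self_mem_adjoin_singleton ℝ q) _)

theorem mul_mem_XqP_of_commute (hp : p ∈ XqP q) (hc : Commute q c) : p * c ∈ XqP q := by
  change p * c * q = -(q * (p * c))
  rw [mul_assoc, ← hc.eq, ← mul_assoc, hp, neg_mul, mul_assoc]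

theorem re_mul_eq_zero_of_mem_XqP (hq : q.re = 0) (hq0 : q ≠ 0) (hp : p ∈ XqP q)
    (hc : Commute q c) : (p * c).re = 0 :=
  XqP_le_im hq hq0 _ (mul_mem_XqP_of_commute hp hc)

theorem mem_XqP_of_re_eq_zero (hq : q.re = 0) (hp : p.re = 0) (hpq : (p * q).re = 0) :
    p ∈ XqP q := by
  have h := Quaternion.star_eq_neg.mpr hpq
  rw [star_mul, Quaternion.star_eq_neg.mpr hq, Quaternion.star_eq_neg.mpr hp, neg_mul_neg] at h
  change p * q = -(q * p)
  rw [h, neg_neg]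

theorem sub_mul_mem_XqP (hq : q.re = 0) (w : ℍ) : w * q - q * w ∈ XqP q := by
  have hsq : Commute (q * q) w := by
    rw [Quaternion.mul_self_eq_neg_normSq hq]
    exact Quaternion.coe_commutes _ w
  change (w * q - q * w) * q = -(q * (w * q - q * w))
  rw [sub_mul, mul_sub, neg_sub, mul_assoc, mul_assoc, ← mul_assoc q q w, hsq.eq]

theorem commute_of_forall_re_mul_eq_zero (hq : q.re = 0)
    (h : ∀ p ∈ XqP q, (p * c).re = 0) : Commute q c := by
  -- test against `p = w q - q w` with `w = star d`: `Re (p c) = Re (w d) = ‖d‖²`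
  set d := q * c - c * q with hd
  have hre : ((star d * q - q * star d) * c).re = Quaternion.normSq d := by
    rw [← Quaternion.re_coe (Quaternion.normSq d), ← Quaternion.star_mul_self, hd, mul_sub,
      sub_mul, Quaternion.re_sub, Quaternion.re_sub, mul_assoc q, Quaternion.re_mul_comm q,
      mul_assoc, mul_assoc]
  have hd0 : d = 0 := by
    rw [← Quaternion.normSq_eq_zero, ← hre]
    exact h _ (sub_mul_mem_XqP hq _)
  exact sub_eq_zero.mp hd0

end

section

variable {q : ℍ} {S T : Submodule ℝ ℍ}

theorem AHDual.apply_eq_mul_apply_one (α : AHDual S) (u : ℍ) :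
    (α : ℍ →ₗ[ℝ] ℍ) u = u * (α : ℍ →ₗ[ℝ] ℍ) 1 := by
  simpa using α.2.1 u 1

def AHDual.mulRight (c : ℍ) (hc : ∀ p ∈ S, (p * c).re = 0) : AHDual S :=
  ⟨LinearMap.mulRight ℝ c, fun a u => mul_assoc a u c, hc⟩

@[simp] theorem AHDual.mulRight_apply (c : ℍ) (hc : ∀ p ∈ S, (p * c).re = 0) (u : ℍ) :
    (AHDual.mulRight c hc : ℍ →ₗ[ℝ] ℍ) u = u * c := rfl

theorem idXqDual_apply (hq : q.re = 0) (hq0 : q ≠ 0) (u : ℍ) :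
    (idXqDual q : ℍ →ₗ[ℝ] ℍ) u = u := by
  rw [idXqDual, dif_pos ⟨hq, hq0⟩]
  rfl

theorem AHDual.apply_one_mem_adjoin (hq : q.re = 0) (hq0 : q ≠ 0) (α : AHDual (XqP q)) :
    (α : ℍ →ₗ[ℝ] ℍ) 1 ∈ Algebra.adjoin ℝ {q} := by
  refine Quaternion.mem_adjoin_of_commute hq hq0 (commute_of_forall_re_mul_eq_zero hq ?_)
  intro p hp
  rw [← AHDual.apply_eq_mul_apply_one α]
  exact α.2.2 p hp

theorem AHDual.commute_apply_one (hq : q.re = 0) (hq0 : q ≠ 0) (α β : AHDual (XqP q)) :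
    Commute ((α : ℍ →ₗ[ℝ] ℍ) 1) ((β : ℍ →ₗ[ℝ] ℍ) 1) :=
  Algebra.commute_of_mem_adjoin_singleton_of_commute (AHDual.apply_one_mem_adjoin hq hq0 β)
    (Algebra.commute_of_mem_adjoin_self (AHDual.apply_one_mem_adjoin hq hq0 α)).symm

theorem QTP.apply_eq_mul {B : AHDual S →ₗ[ℝ] AHDual T →ₗ[ℝ] ℍ} (hB : B ∈ QTP S T)
    {ε : AHDual S} {ε' : AHDual T} (hε : (ε : ℍ →ₗ[ℝ] ℍ) 1 = 1) (hε' : (ε' : ℍ →ₗ[ℝ] ℍ) 1 = 1)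
    (α : AHDual S) (β : AHDual T) :
    B α β = B ε ε' * (β : ℍ →ₗ[ℝ] ℍ) 1 * (α : ℍ →ₗ[ℝ] ℍ) 1 := by
  obtain ⟨u, hu⟩ := hB.1 β
  obtain ⟨v, hv⟩ := hB.2 ε
  have hrow : B α β = B ε β * (α : ℍ →ₗ[ℝ] ℍ) 1 := by
    rw [hu, hu, iotaAH_apply, iotaAH_apply, AHDual.apply_eq_mul_apply_one α,
      AHDual.apply_eq_mul_apply_one ε, hε, mul_one]
  have hcol : B ε β = B ε ε' * (β : ℍ →ₗ[ℝ] ℍ) 1 := by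
    rw [hv, hv, iotaAH_apply, iotaAH_apply, AHDual.apply_eq_mul_apply_one β,
      AHDual.apply_eq_mul_apply_one ε', hε', mul_one]
  rw [hrow, hcol]

def quatToBil (p : ℍ) : AHDual S →ₗ[ℝ] AHDual T →ₗ[ℝ] ℍ :=
  LinearMap.mk₂ ℝ (fun α β => p * (β : ℍ →ₗ[ℝ] ℍ) 1 * (α : ℍ →ₗ[ℝ] ℍ) 1)
    (fun _ _ _ => by simp [mul_add]) (fun _ _ _ => by simp)
    (fun _ _ _ => by simp [add_mul, mul_add]) (fun _ _ _ => by simp)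

@[simp] theorem quatToBil_apply (p : ℍ) (α : AHDual S) (β : AHDual T) :
    quatToBil p α β = p * (β : ℍ →ₗ[ℝ] ℍ) 1 * (α : ℍ →ₗ[ℝ] ℍ) 1 := rfl

theorem quatToBil_mem
    (hcomm : ∀ (α : AHDual S) (β : AHDual T), Commute ((α : ℍ →ₗ[ℝ] ℍ) 1) ((β : ℍ →ₗ[ℝ] ℍ) 1))
    (p : ℍ) : quatToBil p ∈ QTP S T := by
  refine ⟨fun β => ⟨p * (β : ℍ →ₗ[ℝ] ℍ) 1, fun α => ?_⟩,
    fun α => ⟨p * (α : ℍ →ₗ[ℝ] ℍ) 1, fun β => ?_⟩⟩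
  · rw [iotaAH_apply, AHDual.apply_eq_mul_apply_one α, quatToBil_apply]
  · rw [iotaAH_apply, AHDual.apply_eq_mul_apply_one β, quatToBil_apply, mul_assoc, mul_assoc,
      (hcomm α β).eq]

def qtpEquivQuat {ε : AHDual S} {ε' : AHDual T} (hε : (ε : ℍ →ₗ[ℝ] ℍ) 1 = 1)
    (hε' : (ε' : ℍ →ₗ[ℝ] ℍ) 1 = 1)
    (hcomm : ∀ (α : AHDual S) (β : AHDual T), Commute ((α : ℍ →ₗ[ℝ] ℍ) 1) ((β : ℍ →ₗ[ℝ] ℍ) 1)) :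
    QTP S T ≃ₗ[ℝ] ℍ where
  toFun x := (x : AHDual S →ₗ[ℝ] AHDual T →ₗ[ℝ] ℍ) ε ε'
  map_add' _ _ := rfl
  map_smul' _ _ := rfl
  invFun p := ⟨quatToBil p, quatToBil_mem hcomm p⟩
  left_inv x := Subtype.ext <| LinearMap.ext₂ fun α β => (QTP.apply_eq_mul x.2 hε hε' α β).symm
  right_inv p := by simp [hε, hε']

def xqTensorEquiv (hq : q.re = 0) (hq0 : q ≠ 0) : QTP (XqP q) (XqP q) ≃ₗ[ℝ] ℍ :=
  qtpEquivQuat (idXqDual_apply hq hq0 1) (idXqDual_apply hq hq0 1)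
    (AHDual.commute_apply_one hq hq0)

theorem xqTensorEquiv_mem_XqP (hq : q.re = 0) (hq0 : q ≠ 0) {x : QTP (XqP q) (XqP q)}
    (hx : x ∈ QTPprimeSet (XqP q) (XqP q)) : xqTensorEquiv hq hq0 x ∈ XqP q := by
  set ε := idXqDual q
  have hε : (ε : ℍ →ₗ[ℝ] ℍ) 1 = 1 := idXqDual_apply hq hq0 1
  refine mem_XqP_of_re_eq_zero hq (hx ε ε) ?_
  have hx_mulRight := hx ε (AHDual.mulRight q fun p hp =>
    re_mul_eq_zero_of_mem_XqP hq hq0 hp (Commute.refl q))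
  rwa [QTP.apply_eq_mul x.2 hε hε, AHDual.mulRight_apply, one_mul, hε, mul_one] at hx_mulRight

theorem xqTensorEquiv_symm_mem_QTPprimeSet (hq : q.re = 0) (hq0 : q ≠ 0) {p : ℍ}
    (hp : p ∈ XqP q) : (xqTensorEquiv hq hq0).symm p ∈ QTPprimeSet (XqP q) (XqP q) := by
  intro α β
  change (p * (β : ℍ →ₗ[ℝ] ℍ) 1 * (α : ℍ →ₗ[ℝ] ℍ) 1).re = 0
  rw [mul_assoc]
  refine re_mul_eq_zero_of_mem_XqP hq hq0 hp ?_
  exact Algebra.commute_of_mem_adjoin_self (Subalgebra.mul_mem _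
    (AHDual.apply_one_mem_adjoin hq hq0 β) (AHDual.apply_one_mem_adjoin hq hq0 α))

end

/-- For a nonzero imaginary quaternion `q`, the quaternionic tensor
product `X_q ⊗_ℍ X_q` is AH-isomorphic to `X_q`. -/
theorem xq_tensor_xq (q : ℍ) (hq : q.re = 0) (hq0 : q ≠ 0) :
    ∃ e : ↥(QTP (XqP q) (XqP q)) ≃ₗ[ℝ] ℍ,
      (∀ (c : ℍ) (x : ↥(QTP (XqP q) (XqP q))),
        e ⟨hsmulBil (XqP q) (XqP q) c ↑x, hsmulBil_mem c x.2⟩ = c * e x) ∧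
      ((fun x => e x) '' QTPprimeSet (XqP q) (XqP q) = (XqP q : Set ℍ)) := by
  refine ⟨xqTensorEquiv hq hq0, fun c x => rfl, Set.Subset.antisymm ?_ fun p hp => ?_⟩
  · rintro _ ⟨x, hx, rfl⟩
    exact xqTensorEquiv_mem_XqP hq hq0 hx
  · exact ⟨_, xqTensorEquiv_symm_mem_QTPprimeSet hq hq0 hp, LinearEquiv.apply_symm_apply _ p⟩
end
end
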